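/- arXiv:2204.13375 — 6 statements merged into one kernel-verified Lean document; each statement's English description precedes it below -/
import Mathlib

section
/- Let q be a prime power and t a positive integer. If G is a finite group such that every soluble subgroup S of G contains a nilpotent normal subgroup of index at most t in S, and G has a section isomorphic to PSL(2,q), then q ≤ 2t + 1. -/
/-!
The image `B̄` of the Borel subgroup `B` of upper triangular matrices of `SL(2,q)` in
`PSL(2,q)` is soluble. A minimal subgroup `T` of the section's numerator mapping onto `B̄` is
soluble, since the kernel of `T → B̄` lies in the Frattini subgroup of `T`, which is nilpotent.
A nilpotent normal subgroup of `T` of index at most `t` maps onto one of `B̄`, whose preimage `K`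
in `B` is again nilpotent because `B → B̄` has central kernel. Finally, if the diagonal entry `a`
of some `k ∈ K` had `a² ≠ 1`, every unipotent element would be the commutator of a unipotent
element with `k`, so the unipotent radical would lie in every term of the lower central series
of `K`. Hence `K` maps into `{±1}` under the diagonal character `B → F_q^×`, and its index is
at least `(q - 1) / 2`.
-/

open Subgroup
open scoped MatrixGroups commutatorElement

theorem Subgroup.eq_bot_of_le_commutator {G : Type*} [Group G] {K A : Subgroup G}
    [Group.IsNilpotent K] (hAK : A ≤ K) (hA : A ≤ ⁅A, K⁆) : A = ⊥ := by
  have hle : ∀ n, A ≤ K.lowerCentralSeries n := by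
    intro n
    induction n with
    | zero => exact hAK
    | succ n ih => exact hA.trans (commutator_mono ih le_rfl)
  obtain ⟨n, hn⟩ := (isNilpotent_iff_lowerCentralSeries K).mp ‹_›
  exact le_bot_iff.mp (hn ▸ hle n)

theorem Subgroup.mem_center_of_coe_mem_center {G : Type*} [Group G] {H : Subgroup G} {x : H}
    (hx : (x : G) ∈ center G) : x ∈ center H :=
  mem_center_iff.mpr fun y => Subtype.ext (mem_center_iff.mp hx y)

theorem MonoidHom.ker_le_frattini {G H : Type*} [Group G] [Group H] (f : G →* H)
    (hf : ∀ M : Subgroup G, M.map f = f.range → M = ⊤) : f.ker ≤ frattini G := by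
  refine le_iInf₂ fun M hM => ?_
  by_contra hker
  have hMker : Codisjoint M f.ker := codisjoint_iff.mpr (hM.2 _ (left_lt_sup.mpr hker))
  exact hM.1 (hf M (map_eq_range_iff.mpr hMker))

theorem Subgroup.exists_isSolvable_map_eq {G H : Type*} [Group G] [Group H] [Finite G]
    (f : G →* H) {B : Subgroup H} [Group.IsSolvable B] (hB : B ≤ f.range) :
    ∃ T : Subgroup G, Group.IsSolvable T ∧ T.map f = B := by
  obtain ⟨T, hTB, hTmin⟩ := (Set.toFinite {T : Subgroup G | T.map f = B}).exists_minimal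
    ⟨B.comap f, map_comap_eq_self hB⟩
  refine ⟨T, ?_, hTB⟩
  let g := f.comp T.subtype
  have hg : g.range = B := by rw [MonoidHom.range_comp, range_subtype, hTB]
  have hker : g.ker ≤ frattini T := g.ker_le_frattini fun M hM => by
    have hMT : M.map T.subtype ≤ T := by simpa using map_subtype_le M
    have hTM := hTmin (show (M.map T.subtype).map f = B by rw [map_map, ← hg]; exact hM) hMT
    exact top_unique (map_subtype_le_map_subtype.mp
      (by rwa [← MonoidHom.range_eq_map, range_subtype]))
  have : Group.IsSolvable g.range := hg ▸ ‹_›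
  have : Group.IsNilpotent (frattini T) := frattini_nilpotent
  exact Group.isSolvable_of_ker_le_range (frattini T).subtype g.rangeRestrict
    (by rwa [MonoidHom.ker_rangeRestrict, range_subtype])

def HasNilpotentNormalSubgroupOfIndexLE (G : Type*) [Group G] (t : ℕ) : Prop :=
  ∃ N : Subgroup G, N.Normal ∧ Group.IsNilpotent N ∧ N.index ≤ t

namespace HasNilpotentNormalSubgroupOfIndexLE

variable {G G' : Type*} [Group G] [Group G'] {t : ℕ}

theorem of_surjective [Finite G] (f : G →* G') (hf : Function.Surjective f)
    (h : HasNilpotentNormalSubgroupOfIndexLE G t) :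
    HasNilpotentNormalSubgroupOfIndexLE G' t := by
  obtain ⟨N, hN, hNnil, hNt⟩ := h
  refine ⟨N.map f, hN.map f hf, Group.nilpotent_of_surjective _ (f.subgroupMap_surjective N),
    le_trans ?_ hNt⟩
  exact Nat.le_of_dvd (Nat.pos_of_ne_zero index_ne_zero_of_finite) (N.index_map_dvd hf)

theorem of_surjective_of_ker_le_center (f : G →* G') (hf : Function.Surjective f)
    (hker : f.ker ≤ center G) (h : HasNilpotentNormalSubgroupOfIndexLE G' t) :
    HasNilpotentNormalSubgroupOfIndexLE G t := by
  obtain ⟨N, hN, hNnil, hNt⟩ := h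
  refine ⟨N.comap f, hN.comap f, Subgroup.isNilpotent_of_ker_le_center (f.subgroupComap N) ?_,
    (N.index_comap_of_surjective hf).trans_le hNt⟩
  exact fun x hx => mem_center_of_coe_mem_center (hker (congrArg Subtype.val hx))

end HasNilpotentNormalSubgroupOfIndexLE

namespace Matrix.SpecialLinearGroup

variable {F : Type*} [Field F]

def upper (a : Fˣ) (b : F) : SL(2, F) :=
  ⟨!![(a : F), b; 0, ((a⁻¹ : Fˣ) : F)], by simp [Matrix.det_fin_two_of]⟩

@[simp] lemma coe_upper (a : Fˣ) (b : F) :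
    (upper a b : Matrix (Fin 2) (Fin 2) F) = !![(a : F), b; 0, ((a⁻¹ : Fˣ) : F)] := rfl

lemma upper_mul (a c : Fˣ) (b d : F) :
    upper a b * upper c d = upper (a * c) (a * d + b * (c⁻¹ : Fˣ)) := by
  ext i j; fin_cases i <;> fin_cases j <;> simp [mul_comm]

lemma upper_one_zero : upper (1 : Fˣ) (0 : F) = 1 := by
  ext i j; fin_cases i <;> fin_cases j <;> simp

lemma upper_inv (a : Fˣ) (b : F) : (upper a b)⁻¹ = upper a⁻¹ (-b) := by
  ext i j; fin_cases i <;> fin_cases j <;> simp [SL2_inv_expl]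

lemma upper_right_injective (a : Fˣ) : Function.Injective (upper a) := by
  intro b c h
  simpa using congrArg (fun M : SL(2, F) => (M : Matrix (Fin 2) (Fin 2) F) 0 1) h

lemma commutatorElement_upper_one (x : F) (a : Fˣ) (b : F) :
    ⁅upper 1 x, upper a b⁆ = upper 1 (x * (1 - (a : F) ^ 2)) := by
  rw [commutatorElement_def, upper_inv, upper_inv, upper_mul, upper_mul, upper_mul]
  ext i j; fin_cases i <;> fin_cases j <;> simp; field_simp; ring

variable (F) in
def borel : Subgroup SL(2, F) where
  carrier := Set.range fun p : Fˣ × F => upper p.1 p.2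
  one_mem' := ⟨(1, 0), upper_one_zero⟩
  mul_mem' := by
    rintro _ _ ⟨⟨a, b⟩, rfl⟩ ⟨⟨c, d⟩, rfl⟩
    exact ⟨(a * c, a * d + b * (c⁻¹ : Fˣ)), (upper_mul a c b d).symm⟩
  inv_mem' := by
    rintro _ ⟨⟨a, b⟩, rfl⟩
    exact ⟨(a⁻¹, -b), (upper_inv a b).symm⟩

def upperBorel (a : Fˣ) (b : F) : borel F := ⟨upper a b, (a, b), rfl⟩

@[simp] lemma coe_upperBorel (a : Fˣ) (b : F) : (upperBorel a b : SL(2, F)) = upper a b := rfl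

lemma exists_eq_upperBorel (M : borel F) : ∃ a b, M = upperBorel a b := by
  obtain ⟨_, ⟨a, b⟩, rfl⟩ := M
  exact ⟨a, b, rfl⟩

def borelDiag : borel F →* Fˣ where
  toFun M := Units.mk0 ((M : Matrix (Fin 2) (Fin 2) F) 0 0) (by
    obtain ⟨a, b, rfl⟩ := exists_eq_upperBorel M
    simp)
  map_one' := by ext; simp
  map_mul' M N := by
    obtain ⟨a, b, rfl⟩ := exists_eq_upperBorel M
    obtain ⟨c, d, rfl⟩ := exists_eq_upperBorel N
    ext
    simp [upper_mul]

@[simp] lemma borelDiag_upperBorel (a : Fˣ) (b : F) : borelDiag (upperBorel a b) = a := by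
  ext; simp [borelDiag]

lemma borelDiag_surjective : Function.Surjective (borelDiag (F := F)) :=
  fun a => ⟨_, borelDiag_upperBorel a 0⟩

lemma exists_eq_upperBorel_one_of_mem_ker {M : borel F} (hM : M ∈ (borelDiag (F := F)).ker) :
    ∃ x : F, M = upperBorel 1 x := by
  obtain ⟨a, b, rfl⟩ := exists_eq_upperBorel M
  obtain rfl : a = 1 := by simpa using hM
  exact ⟨b, rfl⟩

instance : Group.IsSolvable (borel F) := by
  have hcomm : ∀ M ∈ (borelDiag (F := F)).ker, ∀ N ∈ (borelDiag (F := F)).ker,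
      M * N = N * M := by
    intro M hM N hN
    obtain ⟨x, rfl⟩ := exists_eq_upperBorel_one_of_mem_ker hM
    obtain ⟨y, rfl⟩ := exists_eq_upperBorel_one_of_mem_ker hN
    ext1
    simp [upper_mul, add_comm]
  have : Group.IsSolvable (borelDiag (F := F)).ker :=
    Group.isSolvable_of_comm fun M N => Subtype.ext (hcomm _ M.2 _ N.2)
  exact Group.isSolvable_of_ker_le_range _ borelDiag (by rw [range_subtype])

lemma sq_borelDiag_eq_one {K : Subgroup (borel F)} [K.Normal] [Group.IsNilpotent K]
    {k : borel F} (hk : k ∈ K) : borelDiag k ^ 2 = 1 := by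
  obtain ⟨a, b, rfl⟩ := exists_eq_upperBorel k
  by_contra ha
  have ha' : 1 - (a : F) ^ 2 ≠ 0 := by
    rw [sub_ne_zero, ne_comm, ← Units.val_pow_eq_pow_val, Ne, Units.val_eq_one]
    simpa using ha
  have hU : (borelDiag (F := F)).ker ≤ ⁅(borelDiag (F := F)).ker, K⁆ := by
    intro M hM
    obtain ⟨x, rfl⟩ := exists_eq_upperBorel_one_of_mem_ker hM
    have hx : ⁅upperBorel 1 (x / (1 - (a : F) ^ 2)), upperBorel a b⁆ = upperBorel 1 x := by
      apply (borel F).subtype_injective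
      rw [map_commutatorElement]
      simp only [subtype_apply, coe_upperBorel, commutatorElement_upper_one,
        div_mul_cancel₀ x ha']
    exact hx ▸ commutator_mem_commutator (by simp) hk
  have hUbot := eq_bot_of_le_commutator (hU.trans (commutator_le_right _ _)) hU
  have h1 : upperBorel (1 : Fˣ) (1 : F) ∈ (borelDiag (F := F)).ker := by simp
  rw [hUbot, mem_bot, ← Subtype.val_inj, coe_upperBorel, OneMemClass.coe_one,
    ← upper_one_zero] at h1
  exact one_ne_zero (upper_right_injective 1 h1)

lemma card_units_le_two_mul_index [Finite F] (K : Subgroup (borel F)) [K.Normal]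
    [Group.IsNilpotent K] : Nat.card Fˣ ≤ 2 * K.index := by
  have hK : K ≤ (rootsOfUnity 2 F).comap borelDiag := fun k hk =>
    (mem_rootsOfUnity 2 _).mpr (sq_borelDiag_eq_one hk)
  calc Nat.card Fˣ = (rootsOfUnity 2 F).index * Nat.card (rootsOfUnity 2 F) :=
        (index_mul_card _).symm
    _ ≤ (rootsOfUnity 2 F).index * 2 := Nat.mul_le_mul_left _ (card_rootsOfUnity F 2)
    _ = 2 * ((rootsOfUnity 2 F).comap borelDiag).index := by
        rw [index_comap_of_surjective _ borelDiag_surjective, mul_comm]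
    _ ≤ 2 * K.index := Nat.mul_le_mul_left _ (index_antitone hK)

end Matrix.SpecialLinearGroup

theorem psl_section_bound_general
    (q t : ℕ)
    (F : Type) [Field F] [Fintype F] (hF : Fintype.card F = q)
    (G : Type) [Group G] [Finite G]
    (hsol : ∀ S : Subgroup G, IsSolvable S →
      ∃ N : Subgroup S, N.Normal ∧ Group.IsNilpotent N ∧ N.index ≤ t)
    (hsec : ∃ (H : Subgroup G) (N : Subgroup H) (hN : N.Normal),
      letI := hN
      Nonempty ((H ⧸ N) ≃*
        (Matrix.SpecialLinearGroup (Fin 2) F ⧸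
          Subgroup.center (Matrix.SpecialLinearGroup (Fin 2) F)))) :
    q ≤ 2 * t + 1 := by
  obtain ⟨H, N, hN, ⟨e⟩⟩ := hsec
  let ψ : H →* SL(2, F) ⧸ center SL(2, F) := e.toMonoidHom.comp (QuotientGroup.mk' N)
  have hψ : ψ.range = ⊤ :=
    ψ.range_eq_top_of_surjective (e.surjective.comp (QuotientGroup.mk'_surjective N))
  let π := (QuotientGroup.mk' (center SL(2, F))).comp (Matrix.SpecialLinearGroup.borel F).subtype
  have hπ : π.rangeRestrict.ker ≤ center _ := fun x hx =>
    mem_center_of_coe_mem_center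
      ((QuotientGroup.eq_one_iff (x : SL(2, F))).mp (congrArg Subtype.val hx))
  have : Group.IsSolvable π.range := Group.isSolvable_of_surjective π.rangeRestrict_surjective
  obtain ⟨T, hT, hTπ⟩ := exists_isSolvable_map_eq ψ (B := π.range) (hψ ▸ le_top)
  let eT : T ≃* T.map H.subtype := T.equivMapOfInjective H.subtype H.subtype_injective
  have hTG : HasNilpotentNormalSubgroupOfIndexLE (T.map H.subtype) t :=
    hsol _ (Group.isSolvable_of_surjective (f := eT.toMonoidHom) eT.surjective)
  have hBbar : HasNilpotentNormalSubgroupOfIndexLE π.range t := hTπ ▸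
    (hTG.of_surjective eT.symm.toMonoidHom eT.symm.surjective).of_surjective _
      (ψ.subgroupMap_surjective T)
  obtain ⟨K, hK, hKnil, hKt⟩ :=
    hBbar.of_surjective_of_ker_le_center _ π.rangeRestrict_surjective hπ
  have hcard := Matrix.SpecialLinearGroup.card_units_le_two_mul_index K
  rw [Nat.card_units, Nat.card_eq_fintype_card, hF] at hcard
  omega

/-- if every soluble subgroup of the finite group `G` contains a
nilpotent normal subgroup of index at most `t`, and `G` has a section
isomorphic to `PSL(2,q)` (for `q` a prime power), then `q ≤ 2t + 1`. -/
theorem psl_section_bound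
    (q t : ℕ) (hq : ∃ p k : ℕ, p.Prime ∧ 0 < k ∧ q = p ^ k) (ht : 0 < t)
    (F : Type) [Field F] [Fintype F] (hF : Fintype.card F = q)
    (G : Type) [Group G] [Finite G]
    (hsol : ∀ S : Subgroup G, IsSolvable S →
      ∃ N : Subgroup S, N.Normal ∧ Group.IsNilpotent N ∧ N.index ≤ t)
    (hsec : ∃ (H : Subgroup G) (N : Subgroup H) (hN : N.Normal),
      letI := hN
      Nonempty ((H ⧸ N) ≃*
        (Matrix.SpecialLinearGroup (Fin 2) F ⧸
          Subgroup.center (Matrix.SpecialLinearGroup (Fin 2) F)))) :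
    q ≤ 2 * t + 1 :=
  psl_section_bound_general q t F hF G hsol hsec
end

section
/- Let A ≅ Aff(E,C) be a group of affine cyclic type. Assume that a finite group G has a normal subgroup N with G/N ≅ A, and that no proper subgroup of G has a quotient isomorphic to A. Then G is of the form P ⋊ ℤ_m, where P is a p-group for some prime p, m is a power of a prime q ≠ p, and the image of ℤ_m under the conjugation homomorphism ℤ_m → Aut(P) has order at least |C|. -/
/-- A group is elementary abelian for the prime `p` if it is commutative and
every element has order dividing `p`. -/
def IsElementaryAbelian (p : ℕ) (P : Type*) [Group P] : Prop :=
  (∀ x y : P, x * y = y * x) ∧ ∀ x : P, x ^ p = 1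

/-! Let `f : G →* E ⋊ C` be the quotient map; minimality says that no proper subgroup of `G`
maps onto `E ⋊ C`. A Sylow `p`-subgroup `P` of `G` maps onto the normal Sylow subgroup `E`,
so by the Frattini argument its normalizer maps onto `E ⋊ C`, hence is `G`. The `q`-part `g`
of a preimage of a generator of `C` still maps onto a generator of `C`, so `P ⊔ ⟨g⟩` maps onto
`E ⋊ C` and is `G`. As `C` acts faithfully on the abelian group `E = f P`, the centralizer of
`P` maps into `E`, so `⟨g⟩` acts on `P` through a quotient of order at least `|C|`. -/

open Subgroup

theorem IsElementaryAbelian.isPGroup {p : ℕ} {P : Type*} [Group P]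
    (h : IsElementaryAbelian p P) : IsPGroup p P :=
  fun x => ⟨1, by rw [pow_one, h.2 x]⟩

section

variable {G A : Type*} [Group G] [Group A]

/-- The second condition says that `ker f` lies in the Frattini subgroup of `G`. -/
structure MonoidHom.IsFrattiniCover (f : G →* A) : Prop where
  surjective : Function.Surjective f
  eq_top_of_map_eq_top : ∀ H : Subgroup G, H.map f = ⊤ → H = ⊤

theorem MonoidHom.IsFrattiniCover.of_forall_not_nonempty_quotient_mulEquiv {f : G →* A}
    (hf : Function.Surjective f)
    (hmin : ∀ H : Subgroup G, H ≠ ⊤ → ∀ (M : Subgroup H) (hM : M.Normal),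
      letI := hM; ¬ Nonempty ((H ⧸ M) ≃* A)) :
    f.IsFrattiniCover where
  surjective := hf
  eq_top_of_map_eq_top H hH := by
    by_contra hne
    have hsurj : Function.Surjective (f.comp H.subtype) := by
      rw [← MonoidHom.range_eq_top, MonoidHom.range_comp, range_subtype, hH]
    exact hmin H hne _ inferInstance ⟨QuotientGroup.quotientKerEquivOfSurjective _ hsurj⟩

theorem MonoidHom.IsFrattiniCover.sylow_normal [Finite G] {f : G →* A}
    (hf : f.IsFrattiniCover) {p : ℕ} [Fact p.Prime] (P : Sylow p G) {M : Subgroup G} [M.Normal]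
    (hPM : ↑P ≤ M) (hMP : M.map f ≤ (P : Subgroup G).map f) : (P : Subgroup G).Normal := by
  have h : map f (normalizer ((P : Subgroup G) : Set G) ⊔ M) = map f ⊤ :=
    congrArg (map f) (P.normalizer_sup_eq_top' hPM)
  rw [Subgroup.map_sup, sup_eq_left.mpr (hMP.trans (map_mono le_normalizer)),
    map_top_of_surjective f hf.surjective] at h
  exact normalizer_eq_top_iff.mp (hf.eq_top_of_map_eq_top _ h)

theorem Sylow.map_eq_of_normal_of_not_dvd_index [Finite G] {p : ℕ} [Fact p.Prime] {f : G →* A}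
    (hf : Function.Surjective f) (P : Sylow p G) {S : Subgroup A} [hSn : S.Normal]
    (hS : IsPGroup p S) (hpS : ¬ p ∣ S.index) : (P : Subgroup G).map f = S := by
  have := Finite.of_surjective f hf
  have := Sylow.unique_of_normal (hS.toSylow hpS) hSn
  exact congrArg ((↑) : Sylow p A → Subgroup A)
    (Subsingleton.elim (P.mapSurjective hf) (hS.toSylow hpS))

theorem exists_isPGroup_zpowers_map_eq_top [Finite G] [IsCyclic A] {q : ℕ} [hq : Fact q.Prime]
    (hA : IsPGroup q A) {χ : G →* A} (hχ : Function.Surjective χ) :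
    ∃ g : G, IsPGroup q (zpowers g) ∧ (zpowers g).map χ = ⊤ := by
  have := Finite.of_surjective χ hχ
  obtain ⟨c, hc⟩ := IsCyclic.exists_ofOrder_eq_natCard (α := A)
  obtain ⟨x, rfl⟩ := hχ c
  have hx : orderOf x ≠ 0 := (orderOf_pos x).ne'
  refine ⟨x ^ ordCompl[q] (orderOf x), .of_card (n := (orderOf x).factorization q) ?_, ?_⟩
  · rw [Nat.card_zpowers, orderOf_pow_orderOf_div hx (Nat.ordProj_dvd _ q)]
  · have hcop : (orderOf (χ x)).Coprime (ordCompl[q] (orderOf x)) :=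
      hA.orderOf_coprime (hq.out.coprime_iff_not_dvd.mpr (Nat.not_dvd_ordCompl hq.out hx)) _
    rw [MonoidHom.map_zpowers, map_pow]
    exact eq_top_of_card_eq _ (by rw [Nat.card_zpowers, hcop.orderOf_pow, hc])

theorem MonoidHom.ker_sup_eq_top_of_map_eq_top (f : G →* A) {H : Subgroup G}
    (h : H.map f = ⊤) : f.ker ⊔ H = ⊤ := by
  rw [sup_comm, ← comap_map_eq, h, comap_top]

theorem Subgroup.natCard_map_dvd_relIndex_of_le_ker {f : G →* A} {K : Subgroup G}
    (hK : K ≤ f.ker) (H : Subgroup G) : Nat.card (H.map f) ∣ K.relIndex H :=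
  relIndex_ker (K := H) f ▸ relIndex_dvd_of_le_left H hK

end

namespace SemidirectProduct

variable {N K : Type*} [Group N] [Group K] {φ : K →* MulAut N}

instance normal_range_inl : (inl : N →* N ⋊[φ] K).range.Normal :=
  range_inl_eq_ker_rightHom (φ := φ) ▸ inferInstance

theorem index_range_inl : (inl : N →* N ⋊[φ] K).range.index = Nat.card K := by
  rw [range_inl_eq_ker_rightHom, index_ker, MonoidHom.range_eq_top.mpr rightHom_surjective,
    card_top]

theorem centralizer_range_inl_le_ker_rightHom (hφ : Function.Injective φ)
    (hN : ∀ x y : N, x * y = y * x) :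
    centralizer ((inl : N →* N ⋊[φ] K).range : Set (N ⋊[φ] K)) ≤ rightHom.ker := by
  intro a ha
  rw [MonoidHom.mem_ker, rightHom_eq_right]
  refine hφ (MulEquiv.ext fun n => ?_)
  have h := congrArg left (ha (inl n) ⟨n, rfl⟩)
  simp only [mul_left, left_inl, right_inl, map_one, MulAut.one_apply] at h
  rw [map_one, MulAut.one_apply]
  exact mul_left_cancel (h.symm.trans (hN n a.left))

theorem map_sylow_eq_range_inl {G : Type*} [Group G] [Finite G] {p : ℕ} [Fact p.Prime]
    (hN : IsPGroup p N) (hK : ¬ p ∣ Nat.card K) {f : G →* N ⋊[φ] K}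
    (hf : Function.Surjective f) (P : Sylow p G) : (P : Subgroup G).map f = inl.range :=
  P.map_eq_of_normal_of_not_dvd_index hf
    (hN.of_surjective inl.rangeRestrict inl.rangeRestrict_surjective)
    (index_range_inl (φ := φ) ▸ hK)

end SemidirectProduct

section FrattiniCover

open SemidirectProduct

variable {G N K : Type*} [Group G] [Group N] [Group K] {φ : K →* MulAut N}
  {f : G →* N ⋊[φ] K} {H : Subgroup G}

theorem le_ker_rightHom_comp_of_map_eq_range_inl (hH : H.map f = inl.range) :
    H ≤ (rightHom.comp f).ker := by
  rw [← MonoidHom.comap_ker, ← range_inl_eq_ker_rightHom, ← hH]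
  exact le_comap_map f H

theorem centralizer_le_ker_rightHom_comp_of_map_eq_range_inl (hφ : Function.Injective φ)
    (hN : ∀ x y : N, x * y = y * x) (hH : H.map f = inl.range) :
    centralizer (H : Set G) ≤ (rightHom.comp f).ker := fun d hd =>
  centralizer_range_inl_le_ker_rightHom hφ hN
    (hH ▸ map_centralizer_le_centralizer_image _ f ⟨d, hd, rfl⟩)

theorem MonoidHom.IsFrattiniCover.sup_eq_top_of_map_eq_range_inl (hf : f.IsFrattiniCover)
    (hH : H.map f = SemidirectProduct.inl.range) {Q : Subgroup G}
    (hQ : Q.map (rightHom.comp f) = ⊤) :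
    H ⊔ Q = ⊤ := by
  refine hf.eq_top_of_map_eq_top _ ?_
  rw [Subgroup.map_sup, hH, range_inl_eq_ker_rightHom]
  exact MonoidHom.ker_sup_eq_top_of_map_eq_top _ (by rwa [map_map])

theorem MonoidHom.IsFrattiniCover.sylow_normal_of_map_eq_range_inl [Finite G]
    (hf : f.IsFrattiniCover) {p : ℕ} [Fact p.Prime] {P : Sylow p G}
    (hP : (P : Subgroup G).map f = SemidirectProduct.inl.range) : (P : Subgroup G).Normal := by
  refine hf.sylow_normal P (le_ker_rightHom_comp_of_map_eq_range_inl hP) ?_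
  rw [hP, range_inl_eq_ker_rightHom, ← MonoidHom.comap_ker,
    map_comap_eq_self_of_surjective hf.surjective]

end FrattiniCover

theorem minimal_group_with_affine_cyclic_quotient_general
    (p₀ q₀ k₀ : ℕ) (hp₀ : p₀.Prime) (hq₀ : q₀.Prime) (hp₀q₀ : p₀ ≠ q₀)
    (E C : Type) [Group E] [Group C]
    (hE : IsElementaryAbelian p₀ E) (hC : IsCyclic C)
    (hCcard : Nat.card C = q₀ ^ k₀)
    (φ : C →* MulAut E) (hφ : Function.Injective φ)
    (G : Type) [Group G] [Finite G]
    (N : Subgroup G) (hN : N.Normal)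
    (hquot : letI := hN; Nonempty ((G ⧸ N) ≃* (E ⋊[φ] C)))
    (hmin : ∀ H : Subgroup G, H ≠ ⊤ → ∀ (M : Subgroup H) (hM : M.Normal),
      letI := hM; ¬ Nonempty ((H ⧸ M) ≃* (E ⋊[φ] C))) :
    ∃ p q : ℕ, p.Prime ∧ q.Prime ∧ p ≠ q ∧
      ∃ (P Q : Subgroup G) (m : ℕ),
        P.Normal ∧ IsPGroup p P ∧
        IsCyclic Q ∧ Nat.card Q = m ∧ (∃ k : ℕ, m = q ^ k) ∧
        P ⊓ Q = ⊥ ∧ P ⊔ Q = ⊤ ∧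
        Nat.card C ≤ (Subgroup.centralizer (P : Set G)).relIndex Q := by
  have : Fact p₀.Prime := ⟨hp₀⟩
  have : Fact q₀.Prime := ⟨hq₀⟩
  obtain ⟨e⟩ := hquot
  set f : G →* E ⋊[φ] C := e.toMonoidHom.comp (QuotientGroup.mk' N)
  have hf : f.IsFrattiniCover := .of_forall_not_nonempty_quotient_mulEquiv
    (e.surjective.comp (QuotientGroup.mk'_surjective N)) hmin
  have hCq : IsPGroup q₀ C := .of_card hCcard
  obtain ⟨g, hgq, hgχ⟩ := exists_isPGroup_zpowers_map_eq_top hCq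
    (χ := SemidirectProduct.rightHom.comp f)
    (SemidirectProduct.rightHom_surjective.comp hf.surjective)
  obtain ⟨k, hk⟩ := IsPGroup.iff_card.mp hgq
  obtain ⟨P⟩ : Nonempty (Sylow p₀ G) := inferInstance
  have hpC : ¬ p₀ ∣ Nat.card C := fun h =>
    hp₀q₀ ((Nat.prime_dvd_prime_iff_eq hp₀ hq₀).mp (hp₀.dvd_of_dvd_pow (hCcard ▸ h)))
  have hP := SemidirectProduct.map_sylow_eq_range_inl hE.isPGroup hpC hf.surjective P
  have hdvd := natCard_map_dvd_relIndex_of_le_ker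
    (centralizer_le_ker_rightHom_comp_of_map_eq_range_inl hφ hE.1 hP) (zpowers g)
  rw [hgχ, card_top] at hdvd
  exact ⟨p₀, q₀, hp₀, hq₀, hp₀q₀, P, zpowers g, _, hf.sylow_normal_of_map_eq_range_inl hP,
    P.2, inferInstance, hk, ⟨k, rfl⟩, (IsPGroup.disjoint_of_ne p₀ q₀ hp₀q₀ _ _ P.2 hgq).eq_bot,
    hf.sup_eq_top_of_map_eq_range_inl hP hgχ,
    Nat.le_of_dvd (Nat.pos_of_ne_zero index_ne_zero_of_finite) hdvd⟩

/-- if a finite group `G` has a quotient isomorphic to a group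
`A = Aff(E,C)` of affine cyclic type, while no proper subgroup of `G` has a
quotient isomorphic to `A`, then `G` is an (internal) semidirect product
`P ⋊ ℤ_m` with `P` a `p`-group, `m` a power of a prime `q ≠ p`, and the image
of `ℤ_m` in `Aut(P)` of order at least `|C|`. -/
theorem minimal_group_with_affine_cyclic_quotient
    (p₀ q₀ k₀ : ℕ) (hp₀ : p₀.Prime) (hq₀ : q₀.Prime) (hp₀q₀ : p₀ ≠ q₀)
    (E C : Type) [Group E] [Finite E] [Group C] [Finite C]
    (hE : IsElementaryAbelian p₀ E) (hC : IsCyclic C)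
    (hCcard : Nat.card C = q₀ ^ k₀)
    (φ : C →* MulAut E) (hφ : Function.Injective φ)
    (G : Type) [Group G] [Finite G]
    (N : Subgroup G) (hN : N.Normal)
    (hquot : letI := hN; Nonempty ((G ⧸ N) ≃* (E ⋊[φ] C)))
    (hmin : ∀ H : Subgroup G, H ≠ ⊤ → ∀ (M : Subgroup H) (hM : M.Normal),
      letI := hM; ¬ Nonempty ((H ⧸ M) ≃* (E ⋊[φ] C))) :
    ∃ p q : ℕ, p.Prime ∧ q.Prime ∧ p ≠ q ∧
      ∃ (P Q : Subgroup G) (m : ℕ),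
        P.Normal ∧ IsPGroup p P ∧
        IsCyclic Q ∧ Nat.card Q = m ∧ (∃ k : ℕ, m = q ^ k) ∧
        P ⊓ Q = ⊥ ∧ P ⊔ Q = ⊤ ∧
        Nat.card C ≤ (Subgroup.centralizer (P : Set G)).relIndex Q :=
  minimal_group_with_affine_cyclic_quotient_general p₀ q₀ k₀ hp₀ hq₀ hp₀q₀ E C hE hC hCcard φ hφ G N
    hN hquot hmin
end

section
/- For every integer n ≥ 2, if A is a commutative subgroup of the Heisenberg type group G_n, then the index [G_n : A] ≥ n. -/
/-- The Heisenberg type group `G_n`: the set `ℤ_n × ℤ_n × ℤ_n` with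
multiplication `(a,b,c)·(a',b',c') = (a+a', b+b', c+c'+a·b')`. -/
@[ext] structure Heisenberg (n : ℕ) where
  a : ZMod n
  b : ZMod n
  c : ZMod n

namespace Heisenberg

variable {n : ℕ}

instance : Mul (Heisenberg n) :=
  ⟨fun x y => ⟨x.a + y.a, x.b + y.b, x.c + y.c + x.a * y.b⟩⟩

instance : One (Heisenberg n) := ⟨⟨0, 0, 0⟩⟩

instance : Inv (Heisenberg n) := ⟨fun x => ⟨-x.a, -x.b, -x.c + x.a * x.b⟩⟩

@[simp] theorem mul_a (x y : Heisenberg n) : (x * y).a = x.a + y.a := rfl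
@[simp] theorem mul_b (x y : Heisenberg n) : (x * y).b = x.b + y.b := rfl
@[simp] theorem mul_c (x y : Heisenberg n) : (x * y).c = x.c + y.c + x.a * y.b := rfl
@[simp] theorem one_a : (1 : Heisenberg n).a = 0 := rfl
@[simp] theorem one_b : (1 : Heisenberg n).b = 0 := rfl
@[simp] theorem one_c : (1 : Heisenberg n).c = 0 := rfl
@[simp] theorem inv_a (x : Heisenberg n) : (x⁻¹).a = -x.a := rfl
@[simp] theorem inv_b (x : Heisenberg n) : (x⁻¹).b = -x.b := rfl
@[simp] theorem inv_c (x : Heisenberg n) : (x⁻¹).c = -x.c + x.a * x.b := rfl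

instance instGroup : Group (Heisenberg n) where
  mul_assoc x y z := by ext <;> simp <;> ring
  one_mul x := by ext <;> simp
  mul_one x := by ext <;> simp
  inv_mul_cancel x := by ext <;> simp

end Heisenberg

/-! Let `S` be the image of `A` under `x ↦ x.a`, and `T` the image of `K = {x ∈ A | x.a = 0}`
under `x ↦ x.b`. What remains is inside the centre `{(0, 0, c)}`, so `|A| ≤ |S| · |T| · n`.
Since `x * y = y * x` forces `x.a * y.b = y.a * x.b`, every `s ∈ S` and `t ∈ T` satisfy
`s * t = 0`. In `ℤ/n` the subgroup `S = ⟨d⟩` lies in the image and `T` in the kernel of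
multiplication by `d`, so `|S| · |T| ≤ n`. Hence `|A| ≤ n²`, while `|G_n| = n³`. -/

theorem Subgroup.card_inf_ker_mul_card_map {G G' : Type*} [Group G] [Group G'] (f : G →* G')
    (K : Subgroup G) : Nat.card (f.ker ⊓ K : Subgroup G) * Nat.card (K.map f) = Nat.card K := by
  rw [← relIndex_bot_left (f.ker ⊓ K), ← relIndex_ker, ← relIndex_bot_left K,
    relIndex_inf_mul_relIndex, bot_inf_eq]

theorem ZMod.card_mul_card_le_of_mul_eq_zero {n : ℕ} [NeZero n] (S T : AddSubgroup (ZMod n))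
    (hST : ∀ s ∈ S, ∀ t ∈ T, s * t = 0) : Nat.card S * Nat.card T ≤ n := by
  obtain ⟨d, rfl⟩ := (AddSubgroup.isAddCyclic_iff_exists_zmultiples_eq_top S).mp inferInstance
  let μ := AddMonoidHom.mulLeft d
  have hS : AddSubgroup.zmultiples d ≤ μ.range :=
    AddSubgroup.zmultiples_le.mpr ⟨1, mul_one d⟩
  have hT : T ≤ μ.ker := fun t ht => hST d (AddSubgroup.mem_zmultiples d) t ht
  calc Nat.card (AddSubgroup.zmultiples d) * Nat.card T ≤ Nat.card μ.range * Nat.card μ.ker :=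
        Nat.mul_le_mul (AddSubgroup.card_le_of_le hS) (AddSubgroup.card_le_of_le hT)
    _ = n := by
      rw [← AddSubgroup.index_ker, mul_comm, AddSubgroup.card_mul_index, Nat.card_zmod]

namespace Heisenberg

variable {n : ℕ}

theorem commute_iff {x y : Heisenberg n} : Commute x y ↔ x.a * y.b = y.a * x.b := by
  rw [Commute, SemiconjBy, Heisenberg.ext_iff]
  simp only [mul_a, mul_b, mul_c, add_comm x.a, add_comm x.b, true_and]
  constructor
  · intro h; linear_combination h
  · intro h; linear_combination h

def equivProd : Heisenberg n ≃ ZMod n × ZMod n × ZMod n :=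
  ⟨fun x => (x.a, x.b, x.c), fun p => ⟨p.1, p.2.1, p.2.2⟩, fun _ => rfl, fun _ => rfl⟩

instance [NeZero n] : Finite (Heisenberg n) := .of_equiv _ equivProd.symm

theorem card_eq : Nat.card (Heisenberg n) = n ^ 3 := by
  rw [Nat.card_congr equivProd, Nat.card_prod, Nat.card_prod, Nat.card_zmod, pow_three]

def aHom : Heisenberg n →* Multiplicative (ZMod n) where
  toFun x := .ofAdd x.a
  map_one' := rfl
  map_mul' _ _ := rfl

def bHom : Heisenberg n →* Multiplicative (ZMod n) where
  toFun x := .ofAdd x.b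
  map_one' := rfl
  map_mul' _ _ := rfl

theorem card_ker_bHom_inf_ker_aHom_le [NeZero n] :
    Nat.card (bHom.ker ⊓ aHom.ker : Subgroup (Heisenberg n)) ≤ n := by
  refine (Nat.card_le_card_of_injective (fun x => x.1.c) fun x y hxy => ?_).trans
    (Nat.card_zmod n).le
  obtain ⟨⟨hxb, hxa⟩, ⟨hyb, hya⟩⟩ := And.intro x.2 y.2
  exact Subtype.ext (Heisenberg.ext (hxa.trans hya.symm) (hxb.trans hyb.symm) hxy)

theorem mul_eq_zero_of_mem_map_aHom_of_mem_map_bHom {A : Subgroup (Heisenberg n)}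
    [IsMulCommutative A] {s t : ZMod n} (hs : s ∈ (A.map aHom).toAddSubgroup')
    (ht : t ∈ ((aHom.ker ⊓ A).map bHom).toAddSubgroup') : s * t = 0 := by
  obtain ⟨x, hx, rfl⟩ := hs
  obtain ⟨y, ⟨hy0, hy⟩, rfl⟩ := ht
  have hya : y.a = 0 := hy0
  exact (commute_iff.mp (setLike_mul_comm hx hy)).trans (by rw [hya, zero_mul])

theorem card_le_sq_of_isMulCommutative [NeZero n] (A : Subgroup (Heisenberg n))
    [IsMulCommutative A] : Nat.card A ≤ n ^ 2 := by
  set K := aHom.ker ⊓ A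
  have hcenter : Nat.card (bHom.ker ⊓ K : Subgroup (Heisenberg n)) ≤ n :=
    (Subgroup.card_le_of_le (inf_le_inf_left _ inf_le_left)).trans card_ker_bHom_inf_ker_aHom_le
  have hpair : Nat.card (A.map aHom) * Nat.card (K.map bHom) ≤ n :=
    ZMod.card_mul_card_le_of_mul_eq_zero _ _ fun _ hs _ ht =>
      mul_eq_zero_of_mem_map_aHom_of_mem_map_bHom hs ht
  calc Nat.card A
      = Nat.card (bHom.ker ⊓ K : Subgroup (Heisenberg n)) *
          (Nat.card (A.map aHom) * Nat.card (K.map bHom)) := by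
        rw [← Subgroup.card_inf_ker_mul_card_map aHom A,
          ← Subgroup.card_inf_ker_mul_card_map bHom K]
        ring
    _ ≤ n * n := Nat.mul_le_mul hcenter hpair
    _ = n ^ 2 := (sq n).symm

end Heisenberg

theorem commutative_subgroup_of_heisenberg_index_ge_general (n : ℕ)
    (A : Subgroup (Heisenberg n)) (hA : IsMulCommutative A) :
    n ≤ A.index := by
  rcases eq_zero_or_neZero n with rfl | _
  · exact Nat.zero_le _
  have hindex : A.index * Nat.card A = n * n ^ 2 := by
    rw [A.index_mul_card, Heisenberg.card_eq, pow_succ']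
  refine Nat.le_of_mul_le_mul_right ?_ (pow_pos (Nat.pos_of_neZero n) 2)
  calc n * n ^ 2 = A.index * Nat.card A := hindex.symm
    _ ≤ A.index * n ^ 2 := Nat.mul_le_mul_left _ (Heisenberg.card_le_sq_of_isMulCommutative A)

/-- every commutative subgroup of the Heisenberg type group
`G_n` has index at least `n`. -/
theorem commutative_subgroup_of_heisenberg_index_ge (n : ℕ) (hn : 2 ≤ n)
    (A : Subgroup (Heisenberg n)) (hA : IsMulCommutative A) :
    n ≤ A.index :=
  commutative_subgroup_of_heisenberg_index_ge_general n A hA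
end

section
/- Fix an integer n ≥ 2. Let ℤ² act on ℝ² × S¹ by Φ_n((k,l),(x,y,z)) = (x+k, y+l, e^{2πi k n y}·z), where S¹ is the unit circle in ℂ, and let E_n be the quotient space (ℝ² × S¹)/Φ_n(ℤ²), with ⟨x,y,z⟩ denoting the orbit of (x,y,z). Then the formula Ψ_n(([k],[l],[m]), ⟨x,y,z⟩) = ⟨x + k/n, y + l/n, e^{2πi(k y + m/n)}·z⟩ is a well-defined, effective, continuous action of the Heisenberg type group G_n on E_n by homeomorphisms. -/
open Real

/-- The action `Φ_n` of `(k,l) ∈ ℤ²` on `ℝ² × S¹`: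
`Φ_n((k,l),(x,y,z)) = (x+k, y+l, e^{2πi k n y}·z)`. -/
noncomputable def deckMap (n : ℕ) (k l : ℤ) (v : ℝ × ℝ × Circle) : ℝ × ℝ × Circle :=
  (v.1 + k, v.2.1 + l, Circle.exp (2 * π * ((k : ℝ) * (n : ℝ) * v.2.1)) * v.2.2)

/-- Two points of `ℝ² × S¹` are related if some element of `Φ_n(ℤ²)` maps one
to the other. -/
def deckRel (n : ℕ) (v w : ℝ × ℝ × Circle) : Prop :=
  ∃ k l : ℤ, deckMap n k l v = w

/-- The total space `E_n = (ℝ² × S¹)/Φ_n(ℤ²)`. -/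
def BundleSpace (n : ℕ) : Type := Quot (deckRel n)

instance (n : ℕ) : TopologicalSpace (BundleSpace n) :=
  inferInstanceAs (TopologicalSpace (Quot (deckRel n)))

/-!
The formula for `Ψ_n` makes sense on `ℝ² × S¹` for integer parameters `k, l, m`. This lift
commutes with every deck transformation `Φ_n(a, b)` (the phases differ by `2π(kb - al)`), so it
descends to `E_n`; shifting `k, l, m` by multiples of `n` changes it by a deck transformation, so
the descended map depends only on the residues; and composing two lifts multiplies the parameters
by the Heisenberg law. Effectiveness: the image of `⟨0, 0, 1⟩` determines `k` and `l` mod `n`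
through the translations and then `m` mod `n` through the fibre coordinate.
-/

section

variable {n : ℕ}

theorem deckMap_deckMap (a b a' b' : ℤ) (v : ℝ × ℝ × Circle) :
    deckMap n a b (deckMap n a' b' v) = deckMap n (a + a') (b + b') v := by
  obtain ⟨x, y, z⟩ := v
  simp only [deckMap, ← mul_assoc, ← Circle.exp_add]
  refine Prod.ext (by push_cast; ring) (Prod.ext (by push_cast; ring) ?_)
  exact congrArg (· * z) (Circle.exp_eq_exp.mpr ⟨a * n * b', by push_cast; ring⟩)

theorem deckMap_zero_zero (v : ℝ × ℝ × Circle) : deckMap n 0 0 v = v := by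
  simp [deckMap]

theorem deckRel_equivalence : Equivalence (deckRel n) where
  refl v := ⟨0, 0, deckMap_zero_zero v⟩
  symm := by
    rintro v _ ⟨a, b, rfl⟩
    exact ⟨-a, -b, by rw [deckMap_deckMap, neg_add_cancel, neg_add_cancel, deckMap_zero_zero]⟩
  trans := by
    rintro u _ _ ⟨a, b, rfl⟩ ⟨a', b', rfl⟩
    exact ⟨a' + a, b' + b, (deckMap_deckMap a' b' a b u).symm⟩

-- `Quot.mk` has type `Quot (deckRel n)`, on which the action defined below is not found.
abbrev BundleSpace.mk (n : ℕ) (v : ℝ × ℝ × Circle) : BundleSpace n := Quot.mk (deckRel n) v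

theorem BundleSpace.mk_eq_mk_iff {v w : ℝ × ℝ × Circle} :
    BundleSpace.mk n v = BundleSpace.mk n w ↔ deckRel n v w :=
  Quot.eq.trans deckRel_equivalence.eqvGen_iff

noncomputable def liftAct (n : ℕ) (k l m : ℤ) (v : ℝ × ℝ × Circle) : ℝ × ℝ × Circle :=
  (v.1 + k / n, v.2.1 + l / n, Circle.exp (2 * π * (k * v.2.1 + m / n)) * v.2.2)

theorem continuous_liftAct (k l m : ℤ) : Continuous (liftAct n k l m) := by
  unfold liftAct
  fun_prop

theorem liftAct_zero (v : ℝ × ℝ × Circle) : liftAct n 0 0 0 v = v := by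
  simp [liftAct]

theorem liftAct_liftAct (k l m k' l' m' : ℤ) (v : ℝ × ℝ × Circle) :
    liftAct n k l m (liftAct n k' l' m' v) = liftAct n (k + k') (l + l') (m + m' + k * l') v := by
  obtain ⟨x, y, z⟩ := v
  simp only [liftAct, ← mul_assoc, ← Circle.exp_add]
  refine Prod.ext (by push_cast; ring) (Prod.ext (by push_cast; ring) ?_)
  exact congrArg (· * z) (congrArg Circle.exp (by push_cast; ring))

theorem exists_eq_add_mul_of_intCast_eq {k k' : ℤ} (h : (k : ZMod n) = k') :
    ∃ a : ℤ, k' = k + n * a := by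
  obtain ⟨a, ha⟩ := (ZMod.intCast_eq_intCast_iff_dvd_sub k k' n).mp h
  exact ⟨a, by omega⟩

variable [NeZero n]

theorem liftAct_deckMap (k l m a b : ℤ) (v : ℝ × ℝ × Circle) :
    liftAct n k l m (deckMap n a b v) = deckMap n a b (liftAct n k l m v) := by
  obtain ⟨x, y, z⟩ := v
  have hn : (n : ℝ) ≠ 0 := Nat.cast_ne_zero.mpr (NeZero.ne n)
  simp only [liftAct, deckMap, ← mul_assoc, ← Circle.exp_add]
  refine Prod.ext (by ring) (Prod.ext (by ring) ?_)
  exact congrArg (· * z) (Circle.exp_eq_exp.mpr ⟨k * b - a * l, by push_cast; field_simp; ring⟩)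

theorem deckRel_liftAct_of_intCast_eq {k l m k' l' m' : ℤ} (hk : (k : ZMod n) = k')
    (hl : (l : ZMod n) = l') (hm : (m : ZMod n) = m') (v : ℝ × ℝ × Circle) :
    deckRel n (liftAct n k l m v) (liftAct n k' l' m' v) := by
  obtain ⟨a, rfl⟩ := exists_eq_add_mul_of_intCast_eq hk
  obtain ⟨b, rfl⟩ := exists_eq_add_mul_of_intCast_eq hl
  obtain ⟨c, rfl⟩ := exists_eq_add_mul_of_intCast_eq hm
  refine ⟨a, b, ?_⟩
  obtain ⟨x, y, z⟩ := v
  have hn : (n : ℝ) ≠ 0 := Nat.cast_ne_zero.mpr (NeZero.ne n)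
  simp only [liftAct, deckMap, ← mul_assoc, ← Circle.exp_add]
  refine Prod.ext (by push_cast; field_simp; ring) (Prod.ext (by push_cast; field_simp; ring) ?_)
  exact congrArg (· * z) (Circle.exp_eq_exp.mpr ⟨a * l - c, by push_cast; field_simp; ring⟩)

theorem intCast_eq_of_deckRel_liftAct {k l m k' l' m' : ℤ}
    (h : deckRel n (liftAct n k l m (0, 0, 1)) (liftAct n k' l' m' (0, 0, 1))) :
    (k : ZMod n) = k' ∧ (l : ZMod n) = l' ∧ (m : ZMod n) = m' := by
  obtain ⟨a, b, h⟩ := h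
  simp only [liftAct, deckMap, Prod.ext_iff, ← Circle.exp_add, mul_one, mul_zero, zero_add] at h
  obtain ⟨hx, hy, hz⟩ := h
  obtain ⟨j, hj⟩ := Circle.exp_eq_exp.mp hz
  have hn : (n : ℝ) ≠ 0 := Nat.cast_ne_zero.mpr (NeZero.ne n)
  simp only [ZMod.intCast_eq_intCast_iff_dvd_sub]
  refine ⟨⟨a, ?_⟩, ⟨b, ?_⟩, ⟨a * l - j, ?_⟩⟩
  · field_simp at hx
    exact_mod_cast (by linear_combination -hx : (k' - k : ℝ) = n * a)
  · field_simp at hy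
    exact_mod_cast (by linear_combination -hy : (l' - l : ℝ) = n * b)
  · field_simp at hj
    exact_mod_cast (by linear_combination -hj : (m' - m : ℝ) = n * (a * l - j))

namespace BundleSpace

noncomputable instance : SMul (Heisenberg n) (BundleSpace n) where
  smul g := Quot.map (liftAct n g.a.cast g.b.cast g.c.cast) fun _ _ ⟨a, b, h⟩ =>
    ⟨a, b, h ▸ (liftAct_deckMap _ _ _ a b _).symm⟩

theorem smul_mk (g : Heisenberg n) {k l m : ℤ} (hk : (k : ZMod n) = g.a)
    (hl : (l : ZMod n) = g.b) (hm : (m : ZMod n) = g.c) (v : ℝ × ℝ × Circle) :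
    g • mk n v = mk n (liftAct n k l m v) :=
  Quot.sound <| deckRel_liftAct_of_intCast_eq ((ZMod.intCast_zmod_cast _).trans hk.symm)
    ((ZMod.intCast_zmod_cast _).trans hl.symm) ((ZMod.intCast_zmod_cast _).trans hm.symm) v

theorem smul_mk_cast (g : Heisenberg n) (v : ℝ × ℝ × Circle) :
    g • mk n v = mk n (liftAct n g.a.cast g.b.cast g.c.cast v) :=
  smul_mk g (ZMod.intCast_zmod_cast _) (ZMod.intCast_zmod_cast _) (ZMod.intCast_zmod_cast _) v

noncomputable instance : MulAction (Heisenberg n) (BundleSpace n) where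
  one_smul := Quot.ind fun v => by
    rw [smul_mk 1 (k := 0) (l := 0) (m := 0) (by simp) (by simp) (by simp), liftAct_zero]
  mul_smul g h := Quot.ind fun v => by
    rw [smul_mk_cast h, smul_mk_cast g, liftAct_liftAct]
    exact smul_mk (g * h) (by simp) (by simp) (by simp) v

instance : ContinuousConstSMul (Heisenberg n) (BundleSpace n) where
  continuous_const_smul _ :=
    continuous_quot_lift _ (continuous_quot_mk.comp (continuous_liftAct _ _ _))

instance : FaithfulSMul (Heisenberg n) (BundleSpace n) where
  eq_of_smul_eq_smul {g h} hgh := by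
    have h₀ := hgh (mk n (0, 0, 1))
    rw [smul_mk_cast, smul_mk_cast, mk_eq_mk_iff] at h₀
    obtain ⟨ha, hb, hc⟩ := intCast_eq_of_deckRel_liftAct h₀
    simp only [ZMod.intCast_zmod_cast] at ha hb hc
    exact Heisenberg.ext ha hb hc

end BundleSpace

end

/-- the formula
`Ψ_n(([k],[l],[m]), ⟨x,y,z⟩) = ⟨x + k/n, y + l/n, e^{2πi(k y + m/n)}·z⟩`
gives a well-defined, effective, continuous action of the Heisenberg type
group `G_n` on `E_n` by homeomorphisms. -/
theorem heisenberg_action_on_bundle (n : ℕ) (hn : 2 ≤ n) :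
    ∃ f : Heisenberg n → (BundleSpace n ≃ₜ BundleSpace n),
      (∀ g h : Heisenberg n, ∀ x : BundleSpace n, f (g * h) x = f g (f h x)) ∧
      (∀ x : BundleSpace n, f 1 x = x) ∧
      Function.Injective f ∧
      (∀ (k l m : ℤ) (x y : ℝ) (z : Circle),
        f ⟨(k : ZMod n), (l : ZMod n), (m : ZMod n)⟩
            (Quot.mk (deckRel n) (x, y, z)) =
          Quot.mk (deckRel n)
            (x + (k : ℝ) / (n : ℝ), y + (l : ℝ) / (n : ℝ),
              Circle.exp (2 * π * ((k : ℝ) * y + (m : ℝ) / (n : ℝ))) * z)) := by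
  have : NeZero n := ⟨by omega⟩
  exact ⟨Homeomorph.smul, mul_smul, one_smul (Heisenberg n),
    fun g h hgh => eq_of_smul_eq_smul (DFunLike.congr_fun hgh),
    fun k l m x y z => BundleSpace.smul_mk (n := n) ⟨k, l, m⟩ rfl rfl rfl (x, y, z)⟩
end

section
/- Let p be a prime and let G = A ⋊_α H be a finite semidirect product, where A ≅ ℤ_p^r is elementary abelian, α : H → Aut(A) is an action of H on A, and |H| is not divisible by p. Let A' ≤ A be the subgroup of elements fixed by every element of H. Then A' has an H-invariant complement A'' ≤ A (that is, A = A' × A'' with A'' invariant under α(H)). Moreover, whenever G acts on a set X in such a way that the subgroup H acts trivially on X, the subgroup A'' also acts trivially on X. -/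
/-!
The norm map `N a = ∏ h, α h a` is an endomorphism of `A` with values in the fixed
subgroup `A'`, and it is `a ↦ a ^ |H|` on `A'`. Since `|H|` is invertible modulo the
exponent `p`, `A'` meets `A'' := ker N` trivially and every `a` splits
as a fixed element times an element of `ker N`; `A''` is `H`-invariant because `N ∘ α h = N`.
If `H` acts trivially on `X`, then `α h a` acts on `X` as `a` does (it is a conjugate of `a`
by `h`), so `N a` acts as `a ^ |H|`. Hence each `a ∈ A''` acts by a permutation whose `|H|`-th and
`p`-th powers are trivial.
-/

/-- The subgroup of elements of `A` fixed by every element of `H` acting via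
`α`. -/
def fixedSubgroup {A H : Type*} [CommGroup A] [Group H] (α : H →* MulAut A) :
    Subgroup A where
  carrier := {a : A | ∀ h : H, α h a = a}
  one_mem' := by simp
  mul_mem' := by
    intro a b ha hb h
    rw [map_mul, ha h, hb h]
  inv_mem' := by
    intro a ha h
    rw [map_inv, ha h]

section NormEnd

variable {A H : Type*} [CommGroup A] [Group H] [Fintype H] (α : H →* MulAut A)

def normEnd : A →* A where
  toFun a := ∏ h : H, α h a
  map_one' := by simp
  map_mul' a b := by simp [Finset.prod_mul_distrib]

lemma normEnd_apply (a : A) : normEnd α a = ∏ h : H, α h a := rfl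

lemma normEnd_map (h : H) (a : A) : normEnd α (α h a) = normEnd α a :=
  Fintype.prod_equiv (Equiv.mulRight h) _ _ fun g => by simp

lemma normEnd_mem_fixedSubgroup (a : A) : normEnd α a ∈ fixedSubgroup α := fun h => by
  rw [normEnd_apply, map_prod]
  exact Fintype.prod_equiv (Equiv.mulLeft h) _ _ fun g => by simp

lemma normEnd_of_mem_fixedSubgroup {a : A} (ha : a ∈ fixedSubgroup α) :
    normEnd α a = a ^ Nat.card H := by
  rw [normEnd_apply, Finset.prod_congr rfl fun h _ => ha h, Finset.prod_const,
    Finset.card_univ, Nat.card_eq_fintype_card]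

lemma map_ker_normEnd (h : H) : (normEnd α).ker.map (α h).toMonoidHom = (normEnd α).ker := by
  ext a
  simp only [Subgroup.mem_map, MonoidHom.mem_ker, MulEquiv.coe_toMonoidHom]
  constructor
  · rintro ⟨b, hb, rfl⟩
    rwa [normEnd_map]
  · intro ha
    refine ⟨α h⁻¹ a, by rwa [normEnd_map], ?_⟩
    rw [← MulAut.mul_apply, ← map_mul, mul_inv_cancel, map_one, MulAut.one_apply]

variable {e : ℕ} (hA : ∀ a : A, a ^ e = 1) (hcop : (Nat.card H).Coprime e)
include hA hcop

lemma disjoint_fixedSubgroup_ker_normEnd : Disjoint (fixedSubgroup α) (normEnd α).ker := by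
  rw [Subgroup.disjoint_def]
  intro a hfix hker
  rw [MonoidHom.mem_ker, normEnd_of_mem_fixedSubgroup α hfix] at hker
  exact (pow_eq_one_iff_of_coprime hcop).1 ⟨hker, hA a⟩

lemma codisjoint_fixedSubgroup_ker_normEnd : Codisjoint (fixedSubgroup α) (normEnd α).ker := by
  rw [codisjoint_iff, Subgroup.eq_top_iff']
  intro a
  have hfix := normEnd_mem_fixedSubgroup α a
  -- an `|H|`-th root `b` of `N a` inside `A'` satisfies `N b = N a`
  obtain ⟨m, hm⟩ := exists_pow_eq_self_of_coprime
    (hcop.coprime_dvd_right (orderOf_dvd_of_pow_eq_one (hA (normEnd α a))))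
  set b := normEnd α a ^ m
  have hb : b ∈ fixedSubgroup α := pow_mem hfix m
  have hNb : normEnd α b = normEnd α a := by
    rw [normEnd_of_mem_fixedSubgroup α hb, ← pow_mul, mul_comm, pow_mul, hm]
  have hker : b⁻¹ * a ∈ (normEnd α).ker := by
    rw [MonoidHom.mem_ker, map_mul, map_inv, hNb, inv_mul_cancel]
  simpa [b] using Subgroup.mul_mem_sup hb hker

lemma isCompl_fixedSubgroup_ker_normEnd : IsCompl (fixedSubgroup α) (normEnd α).ker :=
  ⟨disjoint_fixedSubgroup_ker_normEnd α hA hcop, codisjoint_fixedSubgroup_ker_normEnd α hA hcop⟩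

end NormEnd

lemma MonoidHom.map_prod_of_map_eq {ι M N : Type*} [CommMonoid M] [Monoid N] (ψ : M →* N)
    (s : Finset ι) (f : ι → M) {b : N} (hf : ∀ i, ψ (f i) = b) :
    ψ (∏ i ∈ s, f i) = b ^ s.card := by
  classical
  induction s using Finset.induction_on with
  | empty => simp
  | insert i s hi ih => rw [Finset.prod_insert hi, map_mul, ih, hf, Finset.card_insert_of_notMem hi,
      pow_succ']

section SemidirectProduct

open SemidirectProduct

variable {A H K : Type*} [CommGroup A] [Group H] [Group K] {α : H →* MulAut A}
  (σ : A ⋊[α] H →* K) (hσ : ∀ h, σ (inr h) = 1)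
include hσ

lemma map_inl_aut_of_map_inr_eq_one (h : H) (a : A) : σ (inl (α h a)) = σ (inl a) := by
  simp [inl_aut, hσ]

lemma map_inl_normEnd_of_map_inr_eq_one [Fintype H] (a : A) :
    σ (inl (normEnd α a)) = σ (inl a) ^ Nat.card H := by
  rw [normEnd_apply, ← MonoidHom.comp_apply,
    MonoidHom.map_prod_of_map_eq _ _ _ fun h => map_inl_aut_of_map_inr_eq_one σ hσ h a,
    Finset.card_univ, Nat.card_eq_fintype_card]

lemma map_inl_eq_one_of_mem_ker_normEnd [Fintype H] {e : ℕ} (hA : ∀ a : A, a ^ e = 1)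
    (hcop : (Nat.card H).Coprime e) {a : A} (ha : a ∈ (normEnd α).ker) : σ (inl a) = 1 := by
  have hH : σ (inl a) ^ Nat.card H = 1 := by
    rw [← map_inl_normEnd_of_map_inr_eq_one σ hσ, ha, map_one, map_one]
  have he : σ (inl a) ^ e = 1 := by
    rw [← map_pow, ← map_pow, hA, map_one, map_one]
  exact (pow_eq_one_iff_of_coprime hcop).1 ⟨hH, he⟩

end SemidirectProduct

theorem invariant_complement_and_trivial_action_general
    (p : ℕ) (hp : p.Prime)
    (A : Type) [CommGroup A]
    (hA : ∀ x : A, x ^ p = 1)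
    (H : Type) [Group H] [Finite H] (hH : ¬ p ∣ Nat.card H)
    (α : H →* MulAut A) :
    ∃ A'' : Subgroup A,
      (∀ h : H, Subgroup.map (α h).toMonoidHom A'' = A'') ∧
      IsCompl (fixedSubgroup α) A'' ∧
      ∀ (X : Type) (σ : (A ⋊[α] H) →* Equiv.Perm X),
        (∀ h : H, σ (SemidirectProduct.inr h) = 1) →
        ∀ a : A, a ∈ A'' → σ (SemidirectProduct.inl a) = 1 := by
  have := Fintype.ofFinite H
  have hcop : (Nat.card H).Coprime p := ((hp.coprime_iff_not_dvd).2 hH).symm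
  exact ⟨(normEnd α).ker, map_ker_normEnd α, isCompl_fixedSubgroup_ker_normEnd α hA hcop,
    fun _ σ hσ _ => map_inl_eq_one_of_mem_ker_normEnd σ hσ hA hcop⟩

/-- in a semidirect product `G = A ⋊_α H` with `A ≅ ℤ_p^r`
elementary abelian and `p ∤ |H|`, the subgroup `A'` of `H`-fixed elements has
an `H`-invariant complement `A''`; moreover whenever `G` acts on a set `X`
with `H` acting trivially, `A''` acts trivially as well. -/
theorem invariant_complement_and_trivial_action
    (p r : ℕ) (hp : p.Prime)
    (A : Type) [CommGroup A] [Finite A]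
    (hA : ∀ x : A, x ^ p = 1) (hAcard : Nat.card A = p ^ r)
    (H : Type) [Group H] [Finite H] (hH : ¬ p ∣ Nat.card H)
    (α : H →* MulAut A) :
    ∃ A'' : Subgroup A,
      (∀ h : H, Subgroup.map (α h).toMonoidHom A'' = A'') ∧
      IsCompl (fixedSubgroup α) A'' ∧
      ∀ (X : Type) (σ : (A ⋊[α] H) →* Equiv.Perm X),
        (∀ h : H, σ (SemidirectProduct.inr h) = 1) →
        ∀ a : A, a ∈ A'' → σ (SemidirectProduct.inl a) = 1 :=
  invariant_complement_and_trivial_action_general p hp A hA H hH α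
end

section
/- There is a function I : ℕ × ℕ → ℕ with the following property: let A be a finitely generated abelian group whose torsion-free rank is B and whose torsion subgroup has exactly τ elements, and let G be a finite group acting on A by automorphisms. Then G has a normal subgroup N of index at most I(B,τ) such that N acts trivially on the quotient A/pA for every prime p. -/
/-!
Take `N` to be the kernel of the action on `A / mA` with `m = 3 |T|`; its index is at most the
number of endomorphisms of `A / mA`, a finite group of order at most `m ^ B * |T|`. An element of
`N` has finite order and induces on the free part `ℤ ^ B` an endomorphism congruent to `1`
modulo `3`, which is the identity by Minkowski's lemma: if `g = 1 + q ^ k h` has prime order `p`,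
expanding `(1 + q ^ k h) ^ p = 1` shows `q ∣ h`, so `g - 1` is divisible by every power of `q`.
Then `g - 1` takes values in `mA ∩ T = 0`, so `N` even acts trivially on `A`.
-/

open Finset Function

section Minkowski

variable {R : Type*} [Ring R]

theorem one_add_natCast_mul_pow (c : ℕ) (h : R) (n : ℕ) :
    (1 + (c : R) * h) ^ n = ∑ j ∈ range (n + 1), ((n.choose j * c ^ j : ℕ) : R) * h ^ j := by
  rw [add_comm, (Commute.one_right _).add_pow]
  refine sum_congr rfl fun j _ => ?_
  rw [one_pow, mul_one, (Nat.cast_commute c h).mul_pow, mul_assoc, ← (Nat.cast_commute _ _).eq]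
  push_cast
  rw [← mul_assoc, (Nat.cast_commute (n.choose j) ((c : R) ^ j)).eq]

theorem Nat.Coprime.natCast_dvd_of_natCast_dvd_mul {a b : ℕ} (hab : a.Coprime b) {x : R}
    (h : (b : R) ∣ a * x) : (b : R) ∣ x := by
  obtain ⟨u, v, huv⟩ := Nat.isCoprime_iff_coprime.2 hab
  obtain ⟨y, hy⟩ := h
  refine ⟨u * y + v * x, ?_⟩
  calc x = ((u * a + v * b : ℤ) : R) * x := by rw [huv, Int.cast_one, one_mul]
    _ = (b : R) * (u * y + v * x) := by
      push_cast
      rw [add_mul, mul_assoc, hy, mul_add, ← mul_assoc, ← mul_assoc, ← mul_assoc,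
        (Int.cast_commute u _).eq, (Int.cast_commute v _).eq]

theorem natCast_dvd_sum_natCast_mul {ι : Type*} {s : Finset ι} {d : ℕ} {a : ι → ℕ} (x : ι → R)
    (h : ∀ i ∈ s, d ∣ a i) : (d : R) ∣ ∑ i ∈ s, (a i : R) * x i :=
  dvd_sum fun i hi => (Nat.cast_dvd_cast (h i hi)).mul_right _

variable [IsAddTorsionFree R]

theorem natCast_mul_left_injective {n : ℕ} (hn : n ≠ 0) :
    Injective fun x : R => (n : R) * x := by
  intro x y hxy
  exact IsAddTorsionFree.nsmul_right_injective hn (by simpa only [nsmul_eq_mul] using hxy)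

theorem natCast_dvd_of_one_add_pow_eq_one {p q k : ℕ} (hp : p.Prime) (hq : q.Prime)
    (hq3 : 3 ≤ q) (hk : 0 < k) {h : R} (hh : (1 + (q : R) ^ k * h) ^ p = 1) : (q : R) ∣ h := by
  have hsum : ((p * q ^ k : ℕ) : R) * h =
      -∑ j ∈ range (p - 1), ((p.choose (j + 2) * (q ^ k) ^ (j + 2) : ℕ) : R) * h ^ (j + 2) := by
    obtain ⟨p, rfl⟩ : ∃ p', p = p' + 2 := ⟨p - 2, by have := hp.two_le; omega⟩
    rw [← Nat.cast_pow, one_add_natCast_mul_pow, sum_range_succ', sum_range_succ'] at hh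
    simp only [Nat.choose_zero_right, zero_add, pow_zero, pow_one, mul_one, Nat.cast_one,
      add_eq_right] at hh
    rw [eq_neg_iff_add_eq_zero, add_comm, show p + 2 - 1 = p + 1 by omega]
    simpa only [Nat.choose_one_right] using hh
  -- The terms of degree `≥ 2` are divisible by `q ^ (k + 1)`, and by `q ^ (k + 2)` if `p = q`.
  have key : ((q ^ (k + 1) : ℕ) : R) ∣ (q ^ k : ℕ) * h := by
    rcases eq_or_ne p q with rfl | hpq
    · have : ((p ^ (k + 2) : ℕ) : R) ∣ (p : R) * ((p ^ k : ℕ) * h) := by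
        rw [← mul_assoc, ← Nat.cast_mul, hsum, dvd_neg]
        refine natCast_dvd_sum_natCast_mul _ fun j _ => ?_
        rw [← pow_mul]
        rcases j with _ | j
        · calc p ^ (k + 2) = p * p ^ (k + 1) := by ring
            _ ∣ _ := mul_dvd_mul (hp.dvd_choose_self two_ne_zero (by omega))
                (pow_dvd_pow p (by omega))
        · exact (pow_dvd_pow p (by nlinarith)).mul_left _
      obtain ⟨y, hy⟩ := this
      refine ⟨y, natCast_mul_left_injective hp.ne_zero ?_⟩
      simp only [hy, pow_succ', Nat.cast_mul, mul_assoc]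
    · have hcop : p.Coprime (q ^ (k + 1)) := .pow_right _ ((Nat.coprime_primes hp hq).2 hpq)
      refine hcop.natCast_dvd_of_natCast_dvd_mul ?_
      rw [← mul_assoc, ← Nat.cast_mul, hsum, dvd_neg]
      refine natCast_dvd_sum_natCast_mul _ fun j _ => ?_
      rw [← pow_mul]
      exact (pow_dvd_pow q (by nlinarith)).mul_left _
  obtain ⟨y, hy⟩ := key
  refine ⟨y, natCast_mul_left_injective (pow_ne_zero k hq.ne_zero) ?_⟩
  simp only [hy, pow_succ, Nat.cast_mul, mul_assoc]

variable {q : ℕ}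

theorem eq_one_of_pow_prime_eq_one_of_natCast_dvd_sub_one
    (hsep : ∀ x : R, (∀ k, (q : R) ^ k ∣ x) → x = 0) (hq : q.Prime) (hq3 : 3 ≤ q)
    {p : ℕ} (hp : p.Prime) {g : R}
    (hg : g ^ p = 1) (hdvd : (q : R) ∣ g - 1) : g = 1 := by
  have hdvd_pow : ∀ k, (q : R) ^ (k + 1) ∣ g - 1 := by
    intro k
    induction k with
    | zero => simpa using hdvd
    | succ k ih =>
      obtain ⟨h, hh⟩ := ih
      obtain ⟨y, rfl⟩ := natCast_dvd_of_one_add_pow_eq_one hp hq hq3 k.succ_pos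
        (by rwa [← hh, add_sub_cancel])
      exact ⟨y, by rw [hh, pow_succ _ (k + 1), mul_assoc]⟩
  exact sub_eq_zero.1 (hsep _ fun k => (pow_dvd_pow _ k.le_succ).trans (hdvd_pow k))

/-- **Minkowski's lemma**. -/
theorem eq_one_of_isOfFinOrder_of_natCast_dvd_sub_one
    (hsep : ∀ x : R, (∀ k, (q : R) ^ k ∣ x) → x = 0) (hq : q.Prime) (hq3 : 3 ≤ q)
    {g : R} (hg : IsOfFinOrder g)
    (hdvd : (q : R) ∣ g - 1) : g = 1 := by
  by_contra hne
  set n := orderOf g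
  have hn : n ≠ 1 := mt orderOf_eq_one_iff.1 hne
  have hp : n.minFac.Prime := Nat.minFac_prime hn
  have hpow : (g ^ (n / n.minFac)) ^ n.minFac = 1 := by
    rw [← pow_mul, Nat.div_mul_cancel n.minFac_dvd, pow_orderOf_eq_one]
  have hdvd' : (q : R) ∣ g ^ (n / n.minFac) - 1 := by
    rw [← mul_geom_sum]
    exact hdvd.mul_right _
  have hle := orderOf_le_of_pow_eq_one (Nat.div_pos (Nat.minFac_le hg.orderOf_pos) hp.pos)
    (eq_one_of_pow_prime_eq_one_of_natCast_dvd_sub_one hsep hq hq3 hp hpow hdvd')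
  exact hle.not_gt (Nat.div_lt_self hg.orderOf_pos hp.one_lt)

end Minkowski

namespace AddMonoid.End

variable {V : Type*} [AddCommGroup V] [IsAddTorsionFree V]

instance : IsAddTorsionFree (AddMonoid.End V) where
  nsmul_right_injective _ hn _ _ hfg :=
    AddMonoidHom.ext fun v => IsAddTorsionFree.nsmul_right_injective hn (DFunLike.congr_fun hfg v)

theorem natCast_dvd_iff {n : ℕ} (hn : n ≠ 0) {f : AddMonoid.End V} :
    (n : AddMonoid.End V) ∣ f ↔ ∀ v, ∃ w, f v = n • w := by
  refine ⟨fun ⟨h, hh⟩ v => ⟨h v, by rw [hh]; rfl⟩, fun hf => ?_⟩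
  choose w hw using hf
  have hinj := IsAddTorsionFree.nsmul_right_injective (M := V) hn
  refine ⟨{ toFun := w, map_zero' := hinj ?_, map_add' := fun a b => hinj ?_ }, ?_⟩
  · simp only [← hw, map_zero, smul_zero]
  · simp only [← hw, map_add, smul_add]
  · ext v
    exact hw v

theorem eq_one_of_isOfFinOrder_of_sub_eq_nsmul {q : ℕ}
    (hsep : ∀ v : V, (∀ k, ∃ w, v = q ^ k • w) → v = 0) (hq : q.Prime) (hq3 : 3 ≤ q)
    {g : AddMonoid.End V} (hg : IsOfFinOrder g) (hdvd : ∀ v, ∃ w, g v - v = q • w) : g = 1 := by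
  refine eq_one_of_isOfFinOrder_of_natCast_dvd_sub_one (fun f hf => ?_) hq hq3 hg
    ((natCast_dvd_iff hq.ne_zero).2 hdvd)
  ext v
  refine hsep _ fun k => ?_
  obtain ⟨h, rfl⟩ := hf k
  exact ⟨h v, by rw [← Nat.cast_pow]; rfl⟩

end AddMonoid.End

theorem Int.eq_zero_of_forall_pow_dvd {q : ℕ} (hq : 2 ≤ q) {x : ℤ} (h : ∀ k, (q : ℤ) ^ k ∣ x) :
    x = 0 :=
  Int.eq_zero_of_dvd_of_natAbs_lt_natAbs (h x.natAbs) (by simpa using Nat.lt_pow_self hq)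

theorem Pi.int_eq_zero_of_forall_exists_eq_pow_nsmul {ι : Type*} {q : ℕ} (hq : 2 ≤ q) {v : ι → ℤ}
    (h : ∀ k, ∃ w, v = q ^ k • w) : v = 0 :=
  funext fun i => Int.eq_zero_of_forall_pow_dvd hq fun k => by
    obtain ⟨w, rfl⟩ := h k
    exact ⟨w i, by simp⟩

namespace AddEquiv

variable {A V T : Type*} [AddCommGroup A] [AddCommGroup V] [IsAddTorsionFree V] [AddCommGroup T]
  (ε : A ≃+ V × T)

theorem fst_apply_eq_fst_apply_inl (hT : IsAddTorsion T) (f : AddMonoid.End A) (a : A) :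
    (ε (f a)).1 = (ε (f (ε.symm ((ε a).1, 0)))).1 := by
  let φ : T →+ V := (AddMonoidHom.fst V T).comp
    (ε.toAddMonoidHom.comp (f.comp (ε.symm.toAddMonoidHom.comp (AddMonoidHom.inr V T))))
  have hsplit : a = ε.symm ((ε a).1, 0) + ε.symm (0, (ε a).2) := by
    rw [← map_add, Prod.mk_add_mk, add_zero, zero_add, ε.symm_apply_apply]
  conv_lhs => rw [hsplit, map_add, map_add, Prod.fst_add]
  rw [show (ε (f (ε.symm (0, (ε a).2)))).1 = 0 from (φ.isOfFinAddOrder (hT _)).eq_zero', add_zero]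

/-- Multiplicative because every endomorphism of `A` maps the torsion part into itself. -/
def freePart (hT : IsAddTorsion T) : AddMonoid.End A →* AddMonoid.End V where
  toFun f := (AddMonoidHom.fst V T).comp
    (ε.toAddMonoidHom.comp (f.comp (ε.symm.toAddMonoidHom.comp (AddMonoidHom.inl V T))))
  map_one' := by ext v; exact congrArg Prod.fst (ε.apply_symm_apply (v, 0))
  map_mul' f g := by
    ext v
    exact ε.fst_apply_eq_fst_apply_inl hT f _

theorem fst_apply_eq_freePart_apply (hT : IsAddTorsion T) (f : AddMonoid.End A) (a : A) :
    (ε (f a)).1 = ε.freePart hT f (ε a).1 :=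
  ε.fst_apply_eq_fst_apply_inl hT f a

end AddEquiv

theorem AddMonoid.End.eq_one_of_isOfFinOrder_of_sub_eq_nsmul_of_addEquiv_prod
    {A V T : Type*} [AddCommGroup A] [AddCommGroup V] [IsAddTorsionFree V] [AddCommGroup T]
    (ε : A ≃+ V × T) {q : ℕ} (hsep : ∀ v : V, (∀ k, ∃ w, v = q ^ k • w) → v = 0)
    (hq : q.Prime) (hq3 : 3 ≤ q) {n : ℕ} (hn : n ≠ 0) (hT : ∀ t : T, n • t = 0)
    {σ : AddMonoid.End A} (hσ : IsOfFinOrder σ) (h : ∀ a, ∃ b, σ a - a = (q * n) • b) :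
    σ = 1 := by
  have htors : IsAddTorsion T := fun t =>
    isOfFinAddOrder_iff_nsmul_eq_zero.2 ⟨n, Nat.pos_of_ne_zero hn, hT t⟩
  have hfree : ε.freePart htors σ = 1 := by
    refine eq_one_of_isOfFinOrder_of_sub_eq_nsmul hsep hq hq3
      ((ε.freePart htors).isOfFinOrder hσ) fun v => ?_
    obtain ⟨b, hb⟩ := h (ε.symm (v, 0))
    refine ⟨n • (ε b).1, ?_⟩
    have := congrArg (fun x => (ε x).1) hb
    simp only [map_sub, map_nsmul, Prod.fst_sub, Prod.smul_fst,
      ε.fst_apply_eq_freePart_apply htors, ε.apply_symm_apply, mul_smul] at this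
    exact this
  ext a
  obtain ⟨b, hb⟩ := h a
  refine ε.injective (Prod.ext ?_ ?_)
  · rw [ε.fst_apply_eq_freePart_apply htors, hfree]
    rfl
  · have := congrArg (fun x => (ε x).2) hb
    simp only [map_sub, map_nsmul, Prod.snd_sub, Prod.smul_snd, mul_comm q, mul_smul, hT,
      sub_eq_zero] at this
    exact this

namespace ModN

variable {G H V T : Type*} [AddCommGroup G] [AddCommGroup H] [AddCommGroup V] [AddCommGroup T]
  (n : ℕ)

def map (f : G →+ H) : ModN G n →+ ModN H n :=
  (Submodule.mapQ _ _ f.toIntLinearMap fun x hx => by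
    obtain ⟨y, rfl⟩ := hx
    exact ⟨f y, by simp⟩).toAddMonoidHom

@[simp]
theorem map_mkQ (f : G →+ H) (g : G) : map n f (mkQ n g) = mkQ n (f g) := rfl

theorem mkQ_surjective : Surjective (mkQ n : G →+ ModN G n) := Submodule.mkQ_surjective _

theorem mkQ_eq_mkQ_iff {a b : G} : mkQ n a = mkQ n b ↔ ∃ c, a - b = n • c := by
  simp [mkQ, Submodule.Quotient.eq, eq_comm]

def mapEnd : AddMonoid.End G →* AddMonoid.End (ModN G n) where
  toFun := map n
  map_one' := AddMonoidHom.ext fun x => by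
    obtain ⟨g, rfl⟩ := mkQ_surjective n x
    rfl
  map_mul' _ _ := AddMonoidHom.ext fun x => by
    obtain ⟨g, rfl⟩ := mkQ_surjective n x
    rfl

theorem exists_surjective_of_addEquiv_prod (ε : G ≃+ V × T) :
    ∃ s : ModN V n × T → ModN G n, Surjective s := by
  refine ⟨(map n (ε.symm.toAddMonoidHom.comp (.inl V T))).coprod
    ((mkQ n).comp (ε.symm.toAddMonoidHom.comp (.inr V T))), fun x => ?_⟩
  obtain ⟨g, rfl⟩ := mkQ_surjective n x
  refine ⟨(mkQ n (ε g).1, (ε g).2), ?_⟩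
  simp [← map_add]

end ModN

theorem MonoidHom.index_ker_le_natCard {G M : Type*} [Group G] [Monoid M] [Finite M]
    (f : G →* M) : f.ker.index ≤ Nat.card M := by
  rw [← f.ker_toHomUnits, Subgroup.index_ker]
  exact (Nat.card_le_card_of_injective _ Subtype.val_injective).trans
    (Nat.card_le_card_of_injective _ Units.val_injective)

namespace AddMonoid.End

variable (Q : Type*) [AddCommGroup Q] [Finite Q]

instance : Finite (AddMonoid.End Q) := Finite.of_injective _ DFunLike.coe_injective

theorem natCard_le : Nat.card (AddMonoid.End Q) ≤ Nat.card Q ^ Nat.card Q :=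
  (Nat.card_le_card_of_injective _ DFunLike.coe_injective).trans_eq Nat.card_fun

end AddMonoid.End

def AddAut.toAddMonoidEnd (A : Type*) [AddCommGroup A] :
    Multiplicative (AddAut A) →* AddMonoid.End A where
  toFun σ := (Multiplicative.toAdd σ).toAddMonoidHom
  map_one' := rfl
  map_mul' _ _ := rfl

/-- there is a function `I` such that every finite group `G`
acting by automorphisms on a finitely generated abelian group
`A ≅ ℤ^B × T` (with `T` finite of cardinality `τ`) has a normal subgroup `N`
of index at most `I(B,τ)` acting trivially on `A/pA` for every prime `p`. -/
theorem bounded_index_subgroup_acting_trivially_mod_p :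
    ∃ I : ℕ × ℕ → ℕ,
      ∀ (B τ : ℕ) (A : Type) [AddCommGroup A]
        (T : Type) [AddCommGroup T] [Finite T],
        Nat.card T = τ →
        Nonempty (A ≃+ ((Fin B → ℤ) × T)) →
        ∀ (G : Type) [Group G] [Finite G] (ρ : G →* Multiplicative (AddAut A)),
          ∃ N : Subgroup G, N.Normal ∧ N.index ≤ I (B, τ) ∧
            ∀ g ∈ N, ∀ p : ℕ, p.Prime → ∀ a : A, ∃ b : A, Multiplicative.toAdd (ρ g) a = a + p • b := by
  refine ⟨fun bt => ((3 * bt.2) ^ bt.1 * bt.2) ^ ((3 * bt.2) ^ bt.1 * bt.2), ?_⟩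
  rintro B _ A _ T _ _ rfl ⟨ε⟩ G _ _ ρ
  set m := 3 * Nat.card T
  have : NeZero m := ⟨mul_ne_zero three_ne_zero Nat.card_pos.ne'⟩
  let ψ := (ModN.mapEnd m).comp ((AddAut.toAddMonoidEnd A).comp ρ)
  obtain ⟨s, hs⟩ := ModN.exists_surjective_of_addEquiv_prod m ε
  have : Finite (ModN A m) := Finite.of_surjective s hs
  have hQ : Nat.card (ModN A m) ≤ m ^ B * Nat.card T := by
    simpa [Nat.card_prod] using Nat.card_le_card_of_surjective s hs
  refine ⟨ψ.ker, ψ.normal_ker, ?_, fun g hg p _ a => ⟨0, ?_⟩⟩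
  · calc ψ.ker.index ≤ Nat.card (ModN A m) ^ Nat.card (ModN A m) :=
          ψ.index_ker_le_natCard.trans (AddMonoid.End.natCard_le _)
      _ ≤ (m ^ B * Nat.card T) ^ (m ^ B * Nat.card T) :=
          (Nat.pow_le_pow_left hQ _).trans (Nat.pow_le_pow_right (Nat.card_pos.trans_le hQ) hQ)
  · have hρg : AddAut.toAddMonoidEnd A (ρ g) = 1 :=
      AddMonoid.End.eq_one_of_isOfFinOrder_of_sub_eq_nsmul_of_addEquiv_prod ε
        (fun _ => Pi.int_eq_zero_of_forall_exists_eq_pow_nsmul (by norm_num)) Nat.prime_three le_rfl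
        Nat.card_pos.ne' (fun _ => card_nsmul_eq_zero')
        (((AddAut.toAddMonoidEnd A).comp ρ).isOfFinOrder (isOfFinOrder_of_finite g))
        fun a => (ModN.mkQ_eq_mkQ_iff m).1 (DFunLike.congr_fun (ψ.mem_ker.1 hg) (ModN.mkQ m a))
    rw [smul_zero, add_zero]
    exact DFunLike.congr_fun hρg a
end
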